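/- Under the same GMM setup with λ ∈ (0,1/2), if R_min ≥ √(c(λ)^{-1} log(15(K−1)(1+θ))), then for every i ∈ [K] and every μ ∈ U_λ, E_X[w_i(X,μ)] ≥ (3/4)π_i, where the expectation is over X drawn from the full mixture. -/

import Mathlib

open MeasureTheory Real

/-- Density of the `N(m, I_d)` Gaussian on `ℝ^d`. -/
noncomputable def gaussDensity {d : ℕ} (m x : EuclideanSpace ℝ (Fin d)) : ℝ :=
  (2 * Real.pi) ^ (-(d : ℝ) / 2) * Real.exp (-‖x - m‖ ^ 2 / 2)

/-- EM posterior membership weight of component `j` given candidate centers `μ`. -/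
noncomputable def wEM {d K : ℕ} (p : Fin K → ℝ) (μ : Fin K → EuclideanSpace ℝ (Fin d))
    (j : Fin K) (x : EuclideanSpace ℝ (Fin d)) : ℝ :=
  p j * Real.exp (-‖x - μ j‖ ^ 2 / 2) / ∑ k, p k * Real.exp (-‖x - μ k‖ ^ 2 / 2)

/-- `R_k = min_{j ≠ k} ‖μ_j* - μ_k*‖`. -/
noncomputable def Rsep {d K : ℕ} (μs : Fin K → EuclideanSpace ℝ (Fin d)) (k : Fin K) : ℝ :=
  sInf {r | ∃ j, j ≠ k ∧ r = ‖μs j - μs k‖}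

/-- `R_min = min_{i ≠ j} ‖μ_i* - μ_j*‖`. -/
noncomputable def Rmin {d K : ℕ} (μs : Fin K → EuclideanSpace ℝ (Fin d)) : ℝ :=
  sInf {r | ∃ i j, i ≠ j ∧ r = ‖μs i - μs j‖}

/-- `θ = π_max / π_min`. -/
noncomputable def thetaRatio {K : ℕ} (p : Fin K → ℝ) : ℝ :=
  sSup (Set.range p) / sInf (Set.range p)

/-- The exponent constant `c(λ)`. -/
noncomputable def clam (lam : ℝ) : ℝ := (1 / 8) * ((1 - 2 * lam) / (1 + 2 * lam)) ^ 2


/-!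
The mixture density dominates `π_i N(μ_i*, I)`, and the weights sum to one, so it suffices that
each `w_j`, `j ≠ i`, has mean at most `1 / (15 (K - 1))` under `N(μ_i*, I)`. Writing `r` for the
likelihood ratio of components `j` and `i` under `μ`, we have `w_j ≤ min(1, r) ≤ r ^ t` for
`t ∈ [0, 1]`, and completing the square shows `r ^ t · N(μ_i*, I)` is `(π_j / π_i) ^ t e^A` times
a Gaussian density. For `μ ∈ U_λ` the optimal `t` gives `A ≤ -c(λ) ‖μ_j* - μ_i*‖²`, which the
separation assumption pushes below `-log (15 (K - 1) (1 + θ))`.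
-/

open Finset

section Gaussian

variable {d : ℕ}

lemma gaussDensity_nonneg (m x : EuclideanSpace ℝ (Fin d)) : 0 ≤ gaussDensity m x := by
  unfold gaussDensity; positivity

lemma integral_gaussDensity (m : EuclideanSpace ℝ (Fin d)) : ∫ x, gaussDensity m x = 1 := by
  have hgauss : ∫ x : EuclideanSpace ℝ (Fin d), rexp (-‖x - m‖ ^ 2 / 2)
      = (2 * π) ^ ((d : ℝ) / 2) := by
    rw [integral_sub_right_eq_self (fun x => rexp (-‖x‖ ^ 2 / 2)) m]
    have h := GaussianFourier.integral_rexp_neg_mul_sq_norm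
      (V := EuclideanSpace ℝ (Fin d)) (b := 1 / 2) (by norm_num)
    simp only [finrank_euclideanSpace_fin, div_div_eq_mul_div, div_one, neg_mul,
      one_div_mul_eq_div] at h
    simpa [mul_comm, neg_div] using h
  unfold gaussDensity
  rw [integral_const_mul, hgauss, ← rpow_add (by positivity), neg_div, neg_add_cancel, rpow_zero]

lemma integrable_gaussDensity (m : EuclideanSpace ℝ (Fin d)) : Integrable (gaussDensity m) :=
  .of_integral_ne_zero (by simp [integral_gaussDensity])

end Gaussian

section Weights

variable {d K : ℕ} {p : Fin K → ℝ} {μ : Fin K → EuclideanSpace ℝ (Fin d)}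

lemma wEM_nonneg (hp : ∀ k, 0 < p k) (j : Fin K) (x : EuclideanSpace ℝ (Fin d)) :
    0 ≤ wEM p μ j x :=
  div_nonneg (mul_pos (hp j) (exp_pos _)).le (sum_nonneg fun k _ => (mul_pos (hp k) (exp_pos _)).le)

lemma wEM_le_one (hp : ∀ k, 0 < p k) (j : Fin K) (x : EuclideanSpace ℝ (Fin d)) :
    wEM p μ j x ≤ 1 :=
  div_le_one_of_le₀
    (single_le_sum (f := fun k => p k * rexp (-‖x - μ k‖ ^ 2 / 2))
      (fun k _ => (mul_pos (hp k) (exp_pos _)).le) (mem_univ j))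
    (sum_nonneg fun k _ => (mul_pos (hp k) (exp_pos _)).le)

lemma sum_mul_exp_pos (hp : ∀ k, 0 < p k) (i : Fin K) (x : EuclideanSpace ℝ (Fin d)) :
    0 < ∑ k, p k * rexp (-‖x - μ k‖ ^ 2 / 2) :=
  sum_pos (fun k _ => mul_pos (hp k) (exp_pos _)) ⟨i, mem_univ i⟩

lemma sum_wEM (hp : ∀ k, 0 < p k) (i : Fin K) (x : EuclideanSpace ℝ (Fin d)) :
    ∑ j, wEM p μ j x = 1 := by
  unfold wEM
  rw [← sum_div, div_self (sum_mul_exp_pos hp i x).ne']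

lemma continuous_wEM (hp : ∀ k, 0 < p k) (j : Fin K) : Continuous (wEM p μ j) := by
  unfold wEM
  exact Continuous.div (by fun_prop) (by fun_prop) fun x => (sum_mul_exp_pos hp j x).ne'

lemma integrable_wEM_mul_gaussDensity (hp : ∀ k, 0 < p k) (j : Fin K)
    (m : EuclideanSpace ℝ (Fin d)) : Integrable fun x => wEM p μ j x * gaussDensity m x :=
  (integrable_gaussDensity m).bdd_mul (continuous_wEM hp j).aestronglyMeasurable
    (.of_forall fun x => by
      rw [norm_of_nonneg (wEM_nonneg hp j x)]; exact wEM_le_one hp j x)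

lemma wEM_le_ratio (hp : ∀ k, 0 < p k) (i j : Fin K) (x : EuclideanSpace ℝ (Fin d)) :
    wEM p μ j x ≤ p j / p i * rexp ((‖x - μ i‖ ^ 2 - ‖x - μ j‖ ^ 2) / 2) := by
  calc wEM p μ j x ≤ p j * rexp (-‖x - μ j‖ ^ 2 / 2) / (p i * rexp (-‖x - μ i‖ ^ 2 / 2)) :=
        div_le_div_of_nonneg_left (mul_pos (hp j) (exp_pos _)).le (mul_pos (hp i) (exp_pos _))
          (single_le_sum (f := fun k => p k * rexp (-‖x - μ k‖ ^ 2 / 2))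
            (fun k _ => (mul_pos (hp k) (exp_pos _)).le) (mem_univ i))
    _ = p j / p i * rexp ((‖x - μ i‖ ^ 2 - ‖x - μ j‖ ^ 2) / 2) := by
        rw [mul_div_mul_comm, ← exp_sub]; ring_nf

end Weights

lemma le_rpow_of_le_one_of_le {a r t : ℝ} (ha : a ≤ 1) (har : a ≤ r) (hr : 0 < r)
    (ht0 : 0 ≤ t) (ht1 : t ≤ 1) : a ≤ r ^ t := by
  rcases le_total r 1 with hr1 | hr1
  · calc a ≤ r ^ (1 : ℝ) := by rwa [rpow_one]
      _ ≤ r ^ t := rpow_le_rpow_of_exponent_ge hr hr1 ht1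
  · exact ha.trans (one_le_rpow hr1 ht0)

lemma tilted_exponent_eq {E : Type*} [NormedAddCommGroup E] [InnerProductSpace ℝ E]
    (x m a b : E) (t : ℝ) :
    t * ((‖x - a‖ ^ 2 - ‖x - b‖ ^ 2) / 2) - ‖x - m‖ ^ 2 / 2
      = -‖x - (m + t • (b - a))‖ ^ 2 / 2
        + (t * ((‖m - a‖ ^ 2 - ‖m - b‖ ^ 2) / 2) + t ^ 2 * ‖b - a‖ ^ 2 / 2) := by
  simp only [← real_inner_self_eq_norm_sq, inner_sub_left, inner_sub_right, inner_add_left,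
    inner_add_right, real_inner_smul_left, real_inner_smul_right,
    real_inner_comm m x, real_inner_comm a x, real_inner_comm b x,
    real_inner_comm a m, real_inner_comm b m, real_inner_comm b a]
  ring

section Tilting

variable {d K : ℕ} {p : Fin K → ℝ} {μ : Fin K → EuclideanSpace ℝ (Fin d)} {t : ℝ}

lemma wEM_mul_gaussDensity_le (hp : ∀ k, 0 < p k) (i j : Fin K) (ht0 : 0 ≤ t) (ht1 : t ≤ 1)
    (m x : EuclideanSpace ℝ (Fin d)) :
    wEM p μ j x * gaussDensity m x
      ≤ (p j / p i) ^ t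
          * rexp (t * ((‖m - μ i‖ ^ 2 - ‖m - μ j‖ ^ 2) / 2) + t ^ 2 * ‖μ j - μ i‖ ^ 2 / 2)
          * gaussDensity (m + t • (μ j - μ i)) x := by
  have hpji : 0 < p j / p i := div_pos (hp j) (hp i)
  calc wEM p μ j x * gaussDensity m x
      ≤ (p j / p i * rexp ((‖x - μ i‖ ^ 2 - ‖x - μ j‖ ^ 2) / 2)) ^ t * gaussDensity m x :=
        mul_le_mul_of_nonneg_right (le_rpow_of_le_one_of_le (wEM_le_one hp j x)
          (wEM_le_ratio hp i j x) (by positivity) ht0 ht1) (gaussDensity_nonneg m x)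
    _ = (p j / p i) ^ t * (2 * π) ^ (-(d : ℝ) / 2)
          * rexp (t * ((‖x - μ i‖ ^ 2 - ‖x - μ j‖ ^ 2) / 2) - ‖x - m‖ ^ 2 / 2) := by
        rw [mul_rpow hpji.le (exp_pos _).le, ← exp_mul, gaussDensity, sub_eq_add_neg (t * _),
          exp_add, ← neg_div, mul_comm _ t]
        ring
    _ = _ := by
        rw [tilted_exponent_eq, exp_add, gaussDensity]
        ring

lemma integral_wEM_mul_gaussDensity_le (hp : ∀ k, 0 < p k) (i j : Fin K) (ht0 : 0 ≤ t)
    (ht1 : t ≤ 1) (m : EuclideanSpace ℝ (Fin d)) :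
    ∫ x, wEM p μ j x * gaussDensity m x
      ≤ (p j / p i) ^ t
          * rexp (t * ((‖m - μ i‖ ^ 2 - ‖m - μ j‖ ^ 2) / 2) + t ^ 2 * ‖μ j - μ i‖ ^ 2 / 2) := by
  calc ∫ x, wEM p μ j x * gaussDensity m x
      ≤ ∫ x, (p j / p i) ^ t
          * rexp (t * ((‖m - μ i‖ ^ 2 - ‖m - μ j‖ ^ 2) / 2) + t ^ 2 * ‖μ j - μ i‖ ^ 2 / 2)
          * gaussDensity (m + t • (μ j - μ i)) x :=
        integral_mono (integrable_wEM_mul_gaussDensity hp j m)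
          ((integrable_gaussDensity _).const_mul _) (wEM_mul_gaussDensity_le hp i j ht0 ht1 m)
    _ = _ := by rw [integral_const_mul, integral_gaussDensity, mul_one]

end Tilting

/-- The minimiser of `t ↦ -t (1 - 2λ) / 2 + t² (1 + 2λ)² / 2`; the minimum is `-c(λ)`. -/
noncomputable def tiltParam (lam : ℝ) : ℝ := (1 - 2 * lam) / (2 * (1 + 2 * lam) ^ 2)

lemma tiltParam_nonneg {lam : ℝ} (hl : lam < 1 / 2) : 0 ≤ tiltParam lam :=
  div_nonneg (by linarith) (by positivity)

lemma tiltParam_le_one {lam : ℝ} (hl : 0 ≤ lam) : tiltParam lam ≤ 1 :=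
  div_le_one_of_le₀ (by nlinarith) (by positivity)

lemma clam_pos {lam : ℝ} (hl1 : 0 ≤ lam) (hl2 : lam < 1 / 2) : 0 < clam lam := by
  have : 0 < (1 - 2 * lam) / (1 + 2 * lam) := div_pos (by linarith) (by linarith)
  unfold clam; positivity

lemma tilt_exponent_le {lam D α β γ : ℝ} (hl1 : 0 ≤ lam) (hl2 : lam < 1 / 2) (hD : 0 ≤ D)
    (hα0 : 0 ≤ α) (hα : α ≤ lam * D) (hβ : (1 - lam) * D ≤ β) (hγ0 : 0 ≤ γ)
    (hγ : γ ≤ (1 + 2 * lam) * D) :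
    tiltParam lam * ((α ^ 2 - β ^ 2) / 2) + tiltParam lam ^ 2 * γ ^ 2 / 2
      ≤ -(clam lam) * D ^ 2 := by
  have ht := tiltParam_nonneg hl2
  have hαβ : (α ^ 2 - β ^ 2) / 2 ≤ -((1 - 2 * lam) * D ^ 2) / 2 := by
    nlinarith [mul_nonneg hl1 hD, mul_nonneg (by linarith : (0 : ℝ) ≤ 1 - lam) hD]
  have hγ2 : γ ^ 2 ≤ (1 + 2 * lam) ^ 2 * D ^ 2 := by
    rw [← mul_pow]; exact pow_le_pow_left₀ hγ0 hγ 2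
  calc tiltParam lam * ((α ^ 2 - β ^ 2) / 2) + tiltParam lam ^ 2 * γ ^ 2 / 2
      ≤ tiltParam lam * (-((1 - 2 * lam) * D ^ 2) / 2)
          + tiltParam lam ^ 2 * ((1 + 2 * lam) ^ 2 * D ^ 2) / 2 := by gcongr
    _ = -(clam lam) * D ^ 2 := by
        rw [tiltParam, clam]
        field_simp
        ring

lemma exp_neg_mul_sq_le_inv {c M D : ℝ} (hc : 0 < c) (hM : 1 ≤ M)
    (hD : √(c⁻¹ * log M) ≤ D) : rexp (-c * D ^ 2) ≤ M⁻¹ := by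
  have hlog : c⁻¹ * log M ≤ D ^ 2 := by
    rw [← sq_sqrt (mul_nonneg (inv_nonneg.2 hc.le) (log_nonneg hM))]
    exact pow_le_pow_left₀ (sqrt_nonneg _) hD 2
  rw [← exp_log (by linarith : 0 < M), ← exp_neg]
  refine exp_le_exp.2 ?_
  rw [inv_mul_le_iff₀ hc] at hlog
  linarith

lemma rpow_le_one_add {x t : ℝ} (hx : 0 ≤ x) (ht0 : 0 ≤ t) (ht1 : t ≤ 1) : x ^ t ≤ 1 + x := by
  rcases le_total x 1 with hx1 | hx1
  · linarith [rpow_le_one hx hx1 ht0]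
  · calc x ^ t ≤ x ^ (1 : ℝ) := rpow_le_rpow_of_exponent_le hx1 ht1
      _ ≤ 1 + x := by rw [rpow_one]; linarith

lemma div_le_thetaRatio {K : ℕ} {p : Fin K → ℝ} (hp : ∀ k, 0 < p k) (i j : Fin K) :
    p j / p i ≤ thetaRatio p := by
  have hfin := Set.finite_range p
  obtain ⟨k, hk⟩ := (Set.range_nonempty_iff_nonempty.2 ⟨i⟩).csInf_mem hfin
  exact div_le_div₀ ((hp j).le.trans (le_csSup hfin.bddAbove ⟨j, rfl⟩))
    (le_csSup hfin.bddAbove ⟨j, rfl⟩) (hk ▸ hp k) (csInf_le hfin.bddBelow ⟨i, rfl⟩)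

lemma thetaRatio_nonneg {K : ℕ} {p : Fin K → ℝ} (hp : ∀ k, 0 < p k) (i : Fin K) :
    0 ≤ thetaRatio p :=
  (div_pos (hp i) (hp i)).le.trans (div_le_thetaRatio hp i i)

lemma sum_erase_le_of_le_div {K : ℕ} {f : Fin K → ℝ} {c : ℝ} (hc : 0 ≤ c) (i : Fin K)
    (hf : ∀ j ∈ univ.erase i, f j ≤ c / ((K : ℝ) - 1)) : ∑ j ∈ univ.erase i, f j ≤ c := by
  have hcard : ((univ.erase i).card : ℝ) = (K : ℝ) - 1 := by
    rw [card_erase_of_mem (mem_univ i), card_univ, Fintype.card_fin, Nat.cast_sub i.pos,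
      Nat.cast_one]
  refine (sum_le_card_nsmul _ _ _ hf).trans ?_
  rw [nsmul_eq_mul, hcard]
  rcases eq_or_ne ((K : ℝ) - 1) 0 with h | h
  · simpa [h] using hc
  · rw [mul_div_cancel₀ _ h]

section Separation

variable {d K : ℕ} (μs : Fin K → EuclideanSpace ℝ (Fin d))

lemma Rsep_le_norm_sub {j k : Fin K} (h : j ≠ k) : Rsep μs k ≤ ‖μs j - μs k‖ :=
  csInf_le ⟨0, by rintro r ⟨_, _, rfl⟩; exact norm_nonneg _⟩ ⟨j, h, rfl⟩

lemma Rmin_le_norm_sub {i j : Fin K} (h : i ≠ j) : Rmin μs ≤ ‖μs i - μs j‖ :=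
  csInf_le ⟨0, by rintro r ⟨_, _, _, rfl⟩; exact norm_nonneg _⟩ ⟨i, j, h, rfl⟩

end Separation

section Mixture

variable {d K : ℕ} {p : Fin K → ℝ} {μ μs : Fin K → EuclideanSpace ℝ (Fin d)} {lam : ℝ}

lemma integral_wEM_mul_gaussDensity_le_exp (hp : ∀ k, 0 < p k) (hl1 : 0 ≤ lam)
    (hl2 : lam < 1 / 2) {i j : Fin K} (hji : j ≠ i) (hμi : ‖μ i - μs i‖ ≤ lam * Rsep μs i)
    (hμj : ‖μ j - μs j‖ ≤ lam * Rsep μs j) :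
    ∫ x, wEM p μ j x * gaussDensity (μs i) x
      ≤ (1 + thetaRatio p) * rexp (-(clam lam) * ‖μs j - μs i‖ ^ 2) := by
  set D := ‖μs j - μs i‖
  have hi : ‖μs i - μ i‖ ≤ lam * D := by
    rw [norm_sub_rev]
    exact hμi.trans (mul_le_mul_of_nonneg_left (Rsep_le_norm_sub μs hji) hl1)
  have hj : ‖μ j - μs j‖ ≤ lam * D :=
    hμj.trans (mul_le_mul_of_nonneg_left
      ((Rsep_le_norm_sub μs hji.symm).trans_eq (norm_sub_rev _ _)) hl1)
  have hfar : (1 - lam) * D ≤ ‖μs i - μ j‖ := by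
    have : D ≤ ‖μ j - μs j‖ + ‖μs i - μ j‖ := by
      rw [norm_sub_rev (μ j), norm_sub_rev (μs i)]
      exact norm_sub_le_norm_sub_add_norm_sub (μs j) (μ j) (μs i)
    linarith
  have hspread : ‖μ j - μ i‖ ≤ (1 + 2 * lam) * D := by
    have := norm_sub_le_norm_sub_add_norm_sub (μ j) (μs j) (μ i)
    have : ‖μs j - μ i‖ ≤ D + ‖μs i - μ i‖ := norm_sub_le_norm_sub_add_norm_sub _ _ _
    linarith
  have hθ := thetaRatio_nonneg hp i
  calc ∫ x, wEM p μ j x * gaussDensity (μs i) x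
      ≤ (p j / p i) ^ tiltParam lam
          * rexp (tiltParam lam * ((‖μs i - μ i‖ ^ 2 - ‖μs i - μ j‖ ^ 2) / 2)
            + tiltParam lam ^ 2 * ‖μ j - μ i‖ ^ 2 / 2) :=
        integral_wEM_mul_gaussDensity_le hp i j (tiltParam_nonneg hl2) (tiltParam_le_one hl1) _
    _ ≤ (1 + thetaRatio p) * rexp (-(clam lam) * D ^ 2) := by
        refine mul_le_mul ?_ (exp_le_exp.2 ?_) (exp_pos _).le (by linarith)
        · exact (rpow_le_one_add (div_pos (hp j) (hp i)).le (tiltParam_nonneg hl2)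
            (tiltParam_le_one hl1)).trans (by linarith [div_le_thetaRatio hp i j])
        · exact tilt_exponent_le hl1 hl2 (norm_nonneg _) (norm_nonneg _) hi hfar (norm_nonneg _)
            hspread

lemma integral_wEM_mul_gaussDensity_eq_one_sub (hp : ∀ k, 0 < p k) (i : Fin K)
    (m : EuclideanSpace ℝ (Fin d)) :
    ∫ x, wEM p μ i x * gaussDensity m x
      = 1 - ∑ j ∈ univ.erase i, ∫ x, wEM p μ j x * gaussDensity m x := by
  have htotal : ∑ j, ∫ x, wEM p μ j x * gaussDensity m x = 1 := by
    rw [← integral_finsetSum _ fun j _ => integrable_wEM_mul_gaussDensity hp j m]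
    simp_rw [← sum_mul, sum_wEM hp i, one_mul]
    exact integral_gaussDensity m
  rw [← add_sum_erase _ _ (mem_univ i)] at htotal
  linarith

lemma mul_integral_wEM_mul_gaussDensity_le (hp : ∀ k, 0 < p k) (i : Fin K) :
    p i * ∫ x, wEM p μ i x * gaussDensity (μs i) x
      ≤ ∫ x, wEM p μ i x * ∑ j, p j * gaussDensity (μs j) x := by
  have hterm (j : Fin K) : Integrable fun x => p j * (wEM p μ i x * gaussDensity (μs j) x) :=
    (integrable_wEM_mul_gaussDensity hp i (μs j)).const_mul (p j)
  simp_rw [← integral_const_mul, mul_sum, mul_left_comm (wEM p μ i _)]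
  rw [integral_finsetSum _ fun j _ => hterm j]
  exact single_le_sum (f := fun j => ∫ x, p j * (wEM p μ i x * gaussDensity (μs j) x))
    (fun j _ => integral_nonneg fun x =>
      mul_nonneg (hp j).le (mul_nonneg (wEM_nonneg hp i x) (gaussDensity_nonneg _ x)))
    (mem_univ i)

end Mixture

theorem stmt8_general {d K : ℕ} (μs : Fin K → EuclideanSpace ℝ (Fin d)) (p : Fin K → ℝ)
    (lam : ℝ) (hl1 : 0 < lam) (hl2 : lam < 1 / 2)
    (hp : ∀ k, 0 < p k)
    (hsep : Rmin μs ≥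
      Real.sqrt ((clam lam)⁻¹ * Real.log (15 * ((K : ℝ) - 1) * (1 + thetaRatio p)))) :
    ∀ i, ∀ μ : Fin K → EuclideanSpace ℝ (Fin d),
      (∀ k, ‖μ k - μs k‖ ≤ lam * Rsep μs k) →
      (∫ x, wEM p μ i x * ∑ j, p j * gaussDensity (μs j) x) ≥ (3 / 4) * p i := by
  intro i μ hμ
  have hθ := thetaRatio_nonneg hp i
  have hcross : ∀ j ∈ univ.erase i,
      ∫ x, wEM p μ j x * gaussDensity (μs i) x ≤ 1 / 15 / ((K : ℝ) - 1) := by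
    intro j hj
    have hji := ne_of_mem_erase hj
    have hK : (2 : ℝ) ≤ K := by
      exact_mod_cast (Fintype.card_fin K) ▸ Fintype.one_lt_card_iff_nontrivial.2 ⟨j, i, hji⟩
    calc ∫ x, wEM p μ j x * gaussDensity (μs i) x
        ≤ (1 + thetaRatio p) * rexp (-(clam lam) * ‖μs j - μs i‖ ^ 2) :=
          integral_wEM_mul_gaussDensity_le_exp hp hl1.le hl2 hji (hμ i) (hμ j)
      _ ≤ (1 + thetaRatio p) * (15 * ((K : ℝ) - 1) * (1 + thetaRatio p))⁻¹ := by
          gcongr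
          exact exp_neg_mul_sq_le_inv (clam_pos hl1.le hl2) (by nlinarith)
            (hsep.trans (Rmin_le_norm_sub μs hji))
      _ = 1 / 15 / ((K : ℝ) - 1) := by field_simp
  have hsum := sum_erase_le_of_le_div (by norm_num) i hcross
  calc (∫ x, wEM p μ i x * ∑ j, p j * gaussDensity (μs j) x)
      ≥ p i * ∫ x, wEM p μ i x * gaussDensity (μs i) x :=
        mul_integral_wEM_mul_gaussDensity_le hp i
    _ = p i * (1 - ∑ j ∈ univ.erase i, ∫ x, wEM p μ j x * gaussDensity (μs i) x) := by
        rw [integral_wEM_mul_gaussDensity_eq_one_sub hp i]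
    _ ≥ 3 / 4 * p i := by nlinarith [hp i]

theorem stmt8 {d K : ℕ} (μs : Fin K → EuclideanSpace ℝ (Fin d)) (p : Fin K → ℝ)
    (lam : ℝ) (hl1 : 0 < lam) (hl2 : lam < 1 / 2)
    (hp : ∀ k, 0 < p k) (hps : ∑ k, p k = 1)
    (hsep : Rmin μs ≥
      Real.sqrt ((clam lam)⁻¹ * Real.log (15 * ((K : ℝ) - 1) * (1 + thetaRatio p)))) :
    ∀ i, ∀ μ : Fin K → EuclideanSpace ℝ (Fin d),
      (∀ k, ‖μ k - μs k‖ ≤ lam * Rsep μs k) →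
      (∫ x, wEM p μ i x * ∑ j, p j * gaussDensity (μs j) x) ≥ (3 / 4) * p i :=
  stmt8_general μs p lam hl1 hl2 hp hsep
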